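/- arXiv:1905.06369 — 4 statements merged into one kernel-verified Lean document; each statement's English description precedes it below -/
import Mathlib

section
/- Let d ≥ 2 and let D be a spherical convex body on S^d of constant diameter δ with 0 < δ < π/2. Then D is strictly convex, i.e., the boundary of D contains no nondegenerate spherical arc. -/
open scoped RealInnerProductSpace
open Real

noncomputable section

/-- The unit sphere `S^d` in `E = EuclideanSpace ℝ (Fin (d+1))`. -/
def Sph (d : ℕ) : Set (EuclideanSpace ℝ (Fin (d + 1))) := {x | ‖x‖ = 1}

/-- Spherical distance of two points of the sphere. -/
def sdist {d : ℕ} (x y : EuclideanSpace ℝ (Fin (d + 1))) : ℝ := Real.arccos ⟪x, y⟫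

/-- The arc connecting `a` and `b`. -/
def arc {d : ℕ} (a b : EuclideanSpace ℝ (Fin (d + 1))) :
    Set (EuclideanSpace ℝ (Fin (d + 1))) :=
  {z | ∃ s ∈ Set.Icc (0 : ℝ) 1, z = ‖(1 - s) • a + s • b‖⁻¹ • ((1 - s) • a + s • b)}

/-- The hemisphere `H(c)` with center `c`. -/
def Hemi {d : ℕ} (c : EuclideanSpace ℝ (Fin (d + 1))) :
    Set (EuclideanSpace ℝ (Fin (d + 1))) :=
  {x ∈ Sph d | 0 ≤ ⟪c, x⟫}

/-- A set on the sphere is spherically convex: it lies on the sphere, contains no pair of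
antipodes, and the cone over it is a convex subset of the ambient space. -/
def SphConvex {d : ℕ} (C : Set (EuclideanSpace ℝ (Fin (d + 1)))) : Prop :=
  C ⊆ Sph d ∧ (∀ x ∈ C, -x ∉ C) ∧
    Convex ℝ {y | ∃ t : ℝ, 0 ≤ t ∧ ∃ x ∈ C, y = t • x}

/-- Interior of `C` relative to the sphere `S^d` (interior in the subspace topology). -/
def sphInterior {d : ℕ} (C : Set (EuclideanSpace ℝ (Fin (d + 1)))) :
    Set (EuclideanSpace ℝ (Fin (d + 1))) :=
  {x ∈ Sph d | ∃ ε > 0, ∀ y ∈ Sph d, dist y x < ε → y ∈ C}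

/-- Boundary of a closed set `C ⊆ S^d` relative to the sphere. -/
def sphBoundary {d : ℕ} (C : Set (EuclideanSpace ℝ (Fin (d + 1)))) :
    Set (EuclideanSpace ℝ (Fin (d + 1))) :=
  C \ sphInterior C

/-- A spherical convex body: closed, spherically convex, with nonempty interior in `S^d`. -/
def SphBody {d : ℕ} (C : Set (EuclideanSpace ℝ (Fin (d + 1)))) : Prop :=
  SphConvex C ∧ IsClosed C ∧ (sphInterior C).Nonempty

/-- `H(c)` supports `C` at `p`. -/
def SupportsAt {d : ℕ} (c : EuclideanSpace ℝ (Fin (d + 1)))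
    (C : Set (EuclideanSpace ℝ (Fin (d + 1)))) (p : EuclideanSpace ℝ (Fin (d + 1))) : Prop :=
  c ∈ Sph d ∧ C ⊆ Hemi c ∧ p ∈ C ∧ ⟪c, p⟫ = 0

/-- `H(c)` supports `C` (at some point). -/
def Supports {d : ℕ} (c : EuclideanSpace ℝ (Fin (d + 1)))
    (C : Set (EuclideanSpace ℝ (Fin (d + 1)))) : Prop :=
  ∃ p, SupportsAt c C p

/-- The width of `C` determined by the supporting hemisphere `H(a)`: the infimum of the
thicknesses `π - arccos ⟪a, b⟫` of the lunes `H(a) ∩ H(b)` containing `C`. -/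
def widthAt {d : ℕ} (a : EuclideanSpace ℝ (Fin (d + 1)))
    (C : Set (EuclideanSpace ℝ (Fin (d + 1)))) : ℝ :=
  sInf {w | ∃ b ∈ Sph d, b ≠ a ∧ b ≠ -a ∧ C ⊆ Hemi b ∧ w = π - Real.arccos ⟪a, b⟫}

/-- `C` is of constant width `w`. -/
def ConstWidth {d : ℕ} (C : Set (EuclideanSpace ℝ (Fin (d + 1)))) (w : ℝ) : Prop :=
  ∀ a, Supports a C → widthAt a C = w

/-- The diameter of `C`. -/
def sphDiam {d : ℕ} (C : Set (EuclideanSpace ℝ (Fin (d + 1)))) : ℝ :=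
  sSup {r | ∃ x ∈ C, ∃ y ∈ C, r = sdist x y}

/-- `C` is of constant diameter `δ`. -/
def ConstDiam {d : ℕ} (C : Set (EuclideanSpace ℝ (Fin (d + 1)))) (δ : ℝ) : Prop :=
  sphDiam C = δ ∧ ∀ p ∈ sphBoundary C, ∃ p' ∈ sphBoundary C, sdist p p' = δ

/-- A boundary point `p` of `C` is smooth if exactly one hemisphere supports `C` at `p`. -/
def SmoothPoint {d : ℕ} (C : Set (EuclideanSpace ℝ (Fin (d + 1))))
    (p : EuclideanSpace ℝ (Fin (d + 1))) : Prop :=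
  ∃! c, SupportsAt c C p

/-- A smooth spherical convex body: every boundary point is smooth. -/
def SmoothBody {d : ℕ} (C : Set (EuclideanSpace ℝ (Fin (d + 1)))) : Prop :=
  ∀ p ∈ sphBoundary C, SmoothPoint C p

/-- `C` is strictly convex: its boundary contains no nondegenerate arc. -/
def StrictlySphConvex {d : ℕ} (C : Set (EuclideanSpace ℝ (Fin (d + 1)))) : Prop :=
  ∀ a ∈ sphBoundary C, ∀ b ∈ sphBoundary C, a ≠ b → b ≠ -a →
    ¬ (arc a b ⊆ sphBoundary C)

/-- The polar of `C`. -/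
def sphPolar {d : ℕ} (C : Set (EuclideanSpace ℝ (Fin (d + 1)))) :
    Set (EuclideanSpace ℝ (Fin (d + 1))) :=
  {r ∈ Sph d | C ⊆ Hemi r}

/-- Every spherical convex body of constant diameter `δ < π/2` is
strictly convex. -/
theorem strictlyConvex_of_constDiam (d : ℕ) (hd : 2 ≤ d) (δ : ℝ)
    (hδ0 : 0 < δ) (hδπ : δ < π / 2)
    (D : Set (EuclideanSpace ℝ (Fin (d + 1)))) (hD : SphBody D) (hcd : ConstDiam D δ) :
    StrictlySphConvex D := by
  rintro a ha b hb hab hbna hsub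
  obtain ⟨⟨hDS, hanti, hconv⟩, hclosed, hint⟩ := hD
  have haD : a ∈ D := ha.1
  have hbD : b ∈ D := hb.1
  have haS : ‖a‖ = 1 := hDS haD
  have hbS : ‖b‖ = 1 := hDS hbD
  set z : EuclideanSpace ℝ (Fin (d+1)) :=
    (1 - (1/2 : ℝ)) • a + (1/2 : ℝ) • b with hz
  have hzm : z = (1/2 : ℝ) • (a + b) := by rw [hz]; module
  have hzne : z ≠ 0 := by
    rw [hzm]
    intro h
    rcases smul_eq_zero.mp h with h1 | h2
    · norm_num at h1
    · exact hbna (by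
        have : b = -a := by
          have := eq_neg_of_add_eq_zero_right h2
          linear_combination (norm := module) this
        exact this)
  have hN0 : 0 < ‖z‖ := norm_pos_iff.mpr hzne
  have htab : ⟪a, b⟫ < 1 := by
    rcases lt_or_eq_of_le (real_inner_le_norm a b) with h | h
    · simpa [haS, hbS] using h
    · exfalso
      apply hab
      have : ⟪a, b⟫ = 1 := by rw [h, haS, hbS]; norm_num
      exact (inner_eq_one_iff_of_norm_eq_one haS hbS).mp (by exact_mod_cast this)
  have hNsq : ‖z‖^2 = (1 + ⟪a, b⟫)/2 := by
    have h : ⟪z, z⟫ = (1 + ⟪a, b⟫)/2 := by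
      rw [hzm]
      simp only [inner_add_left, inner_add_right, real_inner_smul_left, real_inner_smul_right]
      rw [real_inner_self_eq_norm_sq, real_inner_self_eq_norm_sq, haS, hbS, real_inner_comm b a]
      ring
    rw [← real_inner_self_eq_norm_sq, h]
  have hN1 : ‖z‖ < 1 := by nlinarith [hN0]
  set m : EuclideanSpace ℝ (Fin (d+1)) := ‖z‖⁻¹ • z with hm
  have hmarc : m ∈ arc a b := ⟨1/2, by norm_num, rfl⟩
  have hmB : m ∈ sphBoundary D := hsub hmarc
  obtain ⟨p', hp', hdp⟩ := hcd.2 m hmB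
  have hp'D : p' ∈ D := hp'.1
  have hp'S : ‖p'‖ = 1 := hDS hp'D
  have hle : ∀ x ∈ D, sdist x p' ≤ δ := by
    intro x hx
    rw [← hcd.1]
    apply le_csSup
    · refine ⟨π, ?_⟩
      rintro r ⟨u, -, v, -, rfl⟩
      exact Real.arccos_le_pi _
    · exact ⟨x, hx, p', hp'D, rfl⟩
  have hcosδ : 0 < Real.cos δ := by
    apply Real.cos_pos_of_mem_Ioo
    constructor
    · linarith [Real.pi_pos]
    · exact hδπ
  have hbound : ∀ x : EuclideanSpace ℝ (Fin (d+1)), ‖x‖ = 1 →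
      -1 ≤ ⟪x, p'⟫ ∧ ⟪x, p'⟫ ≤ 1 := by
    intro x hx
    have := abs_real_inner_le_norm x p'
    rw [hx, hp'S] at this
    constructor <;> [linarith [neg_abs_le (⟪x, p'⟫ : ℝ)]; linarith [le_abs_self (⟪x, p'⟫ : ℝ)]]
  have hkey : ∀ x ∈ D, ‖x‖ = 1 → Real.cos δ ≤ ⟪x, p'⟫ := by
    intro x hx hxS
    have h1 : Real.arccos ⟪x, p'⟫ ≤ δ := hle x hx
    obtain ⟨hb1, hb2⟩ := hbound x hxS
    calc Real.cos δ ≤ Real.cos (Real.arccos ⟪x, p'⟫) :=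
          Real.cos_le_cos_of_nonneg_of_le_pi (Real.arccos_nonneg _) (by linarith [Real.pi_pos]) h1
      _ = ⟪x, p'⟫ := Real.cos_arccos hb1 hb2
  have hA : Real.cos δ ≤ ⟪a, p'⟫ := hkey a haD haS
  have hB : Real.cos δ ≤ ⟪b, p'⟫ := hkey b hbD hbS
  have hmS : ‖m‖ = 1 := by
    rw [hm, norm_smul, norm_inv, norm_norm, inv_mul_cancel₀ (ne_of_gt hN0)]
  have hmp : ⟪m, p'⟫ = Real.cos δ := by
    obtain ⟨hb1, hb2⟩ := hbound m hmS
    have : Real.arccos ⟪m, p'⟫ = δ := hdp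
    rw [← this, Real.cos_arccos hb1 hb2]
  have hcomp : ⟪m, p'⟫ = ‖z‖⁻¹ * ((⟪a, p'⟫ + ⟪b, p'⟫)/2) := by
    rw [hm, hzm, real_inner_smul_left, real_inner_smul_left, inner_add_left]
    ring
  have hNi : 1 < ‖z‖⁻¹ := by
    rw [lt_inv_comm₀ one_pos hN0]
    simpa using hN1
  nlinarith [hA, hB, hcosδ, hNi, hmp, hcomp]

end
end

section
/- Let D be a spherical convex body on S² of constant diameter δ. Then every two diametral chords of D intersect: if a, b, c, d ∈ D satisfy dist_S(a,b) = δ and dist_S(c,d) = δ, then the arc ab and the arc cd have a common point. -/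
open scoped RealInnerProductSpace
open Real

noncomputable section

/-!
Four points of the 2-sphere are linearly dependent in `ℝ³`, say `α a + β b + γ c + θ e = 0`,
and the sign pattern of the coefficients decides how the chords sit. All signs equal is
impossible, since the cone over a spherically convex set is pointed. If one point, say `e`, lies
in the cone over the other three, the ray from its diametral partner `c` through `e` leaves the
spherical triangle `abc` at a point `x` of the arc `ab`; as `sdist c x ≤ δ = sdist c e`, `e = x`.
Otherwise the points split into two pairs whose arcs meet at a point `x ∈ D`. For the pairs
`{a, b}, {c, e}` we are done; for `{a, c}, {b, e}` (or `{a, e}, {b, c}`) the triangle inequalities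
`δ ≤ sdist a x + sdist x b` and `δ ≤ sdist c x + sdist x e` add up to at most
`sdist a c + sdist b e ≤ 2 δ`, so both are equalities and `x` lies on both diametral chords.
-/

open InnerProductGeometry
open scoped NNReal

section

variable {V : Type*} [NormedAddCommGroup V] [InnerProductSpace ℝ V]

theorem smul_add_smul_eq_zero {p q : V} (hp : ‖p‖ = 1) (hq : ‖q‖ = 1) (hpq : q ≠ -p)
    {α β : ℝ} (hα : 0 ≤ α) (hβ : 0 ≤ β) (h : α • p + β • q = 0) : α = 0 ∧ β = 0 := by
  have hpq' : -1 < ⟪p, q⟫ := by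
    refine (neg_one_le_real_inner_of_norm_eq_one hp hq).lt_of_ne fun h' => hpq ?_
    rw [(inner_eq_neg_one_iff_of_norm_eq_one hp hq).1 h'.symm, neg_neg]
  have key : (α + β) * (1 + ⟪p, q⟫) = 0 := by
    have := congrArg (⟪p + q, ·⟫) h
    simp only [inner_add_left, inner_add_right, real_inner_smul_right, inner_zero_right,
      real_inner_self_eq_norm_sq, hp, hq, real_inner_comm p q] at this
    linear_combination this
  have hsum : α + β = 0 := (mul_eq_zero.1 key).resolve_right (by linarith)
  constructor <;> linarith

theorem smul_add_smul_mem_span_pair {a b : V} {α β : ℝ} (hα : 0 ≤ α) (hβ : 0 ≤ β) :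
    α • a + β • b ∈ Submodule.span ℝ≥0 {a, b} :=
  Submodule.mem_span_pair.2 ⟨⟨α, hα⟩, ⟨β, hβ⟩, rfl⟩

end

section

variable {d : ℕ} {C : Set (EuclideanSpace ℝ (Fin (d + 1)))} {δ : ℝ}

local notation "E" => EuclideanSpace ℝ (Fin (d + 1))

theorem sdist_eq_angle {x y : E} (hx : ‖x‖ = 1) (hy : ‖y‖ = 1) : sdist x y = angle x y := by
  rw [sdist, angle, hx, hy, mul_one, div_one]

theorem sdist_comm (x y : E) : sdist x y = sdist y x := by
  rw [sdist, sdist, real_inner_comm]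

theorem sdist_self {x : E} (hx : ‖x‖ = 1) : sdist x x = 0 := by
  rw [sdist_eq_angle hx hx, angle_self (norm_ne_zero_iff.1 (by rw [hx]; exact one_ne_zero))]

theorem sdist_triangle {x y z : E} (hx : ‖x‖ = 1) (hy : ‖y‖ = 1) (hz : ‖z‖ = 1) :
    sdist x z ≤ sdist x y + sdist y z := by
  rw [sdist_eq_angle hx hz, sdist_eq_angle hx hy, sdist_eq_angle hy hz]
  exact angle_le_angle_add_angle x y z

theorem eq_of_sdist_le_zero {x y : E} (hx : ‖x‖ = 1) (hy : ‖y‖ = 1) (h : sdist x y ≤ 0) :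
    x = y :=
  eq_of_angle_eq_zero_of_norm_eq
    ((sdist_eq_angle hx hy).symm.trans (h.antisymm (Real.arccos_nonneg _))) (hx.trans hy.symm)

theorem arc_comm (a b : E) : arc a b = arc b a := by
  have key : ∀ u v : E, arc u v ⊆ arc v u := by
    rintro u v z ⟨s, ⟨hs0, hs1⟩, rfl⟩
    refine ⟨1 - s, ⟨by linarith, by linarith⟩, ?_⟩
    rw [show ((1 : ℝ) - (1 - s)) • v + (1 - s) • u = (1 - s) • u + s • v by module]
  exact (key a b).antisymm (key b a)

theorem mem_arc_of_mem_span {a b z : E} (hz : ‖z‖ = 1) (h : z ∈ Submodule.span ℝ≥0 {a, b}) :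
    z ∈ arc a b := by
  obtain ⟨k, l, rfl⟩ := Submodule.mem_span_pair.1 h
  simp only [NNReal.smul_def] at hz ⊢
  generalize hα' : (k : ℝ) = α at hz ⊢
  generalize hβ' : (l : ℝ) = β at hz ⊢
  have hα : 0 ≤ α := hα' ▸ k.2
  have hβ : 0 ≤ β := hβ' ▸ l.2
  have hαβ : 0 < α + β := by
    refine (add_nonneg hα hβ).lt_of_ne fun h0 => ?_
    obtain ⟨rfl, rfl⟩ : α = 0 ∧ β = 0 := ⟨by linarith, by linarith⟩
    simp at hz
  refine ⟨β / (α + β), ⟨by positivity, (div_le_one hαβ).2 (by linarith)⟩, ?_⟩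
  have hw : (1 - β / (α + β)) • a + (β / (α + β)) • b = (α + β)⁻¹ • (α • a + β • b) := by
    rw [one_sub_div hαβ.ne', add_sub_cancel_right, smul_add, smul_smul, smul_smul,
      div_eq_inv_mul, div_eq_inv_mul]
  rw [hw, norm_smul, hz, mul_one, norm_inv, Real.norm_of_nonneg hαβ.le,
    inv_inv, smul_smul, mul_inv_cancel₀ hαβ.ne', one_smul]

theorem mem_span_of_mem_arc {a b z : E} (h : z ∈ arc a b) : z ∈ Submodule.span ℝ≥0 {a, b} := by
  obtain ⟨s, ⟨hs0, hs1⟩, rfl⟩ := h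
  exact Submodule.smul_mem _ (⟨_, inv_nonneg.2 (norm_nonneg _)⟩ : ℝ≥0)
    (smul_add_smul_mem_span_pair (by linarith) hs0)

theorem norm_eq_one_of_mem_arc {a b z : E} (ha : ‖a‖ = 1) (hb : ‖b‖ = 1) (hab : b ≠ -a)
    (h : z ∈ arc a b) : ‖z‖ = 1 := by
  obtain ⟨s, ⟨hs0, hs1⟩, rfl⟩ := h
  refine NormedSpace.norm_normalize_eq_one_iff.2 fun h0 => ?_
  have := smul_add_smul_eq_zero ha hb hab (by linarith) hs0 h0
  linarith [this.1, this.2]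

theorem mem_arc_iff {a b z : E} (ha : ‖a‖ = 1) (hb : ‖b‖ = 1) (hab : b ≠ -a) :
    z ∈ arc a b ↔ ‖z‖ = 1 ∧ z ∈ Submodule.span ℝ≥0 {a, b} :=
  ⟨fun h => ⟨norm_eq_one_of_mem_arc ha hb hab h, mem_span_of_mem_arc h⟩,
    fun h => mem_arc_of_mem_span h.1 h.2⟩

theorem left_mem_arc {a b : E} (ha : ‖a‖ = 1) : a ∈ arc a b :=
  mem_arc_of_mem_span ha (Submodule.subset_span (Set.mem_insert a {b}))

theorem right_mem_arc {a b : E} (hb : ‖b‖ = 1) : b ∈ arc a b :=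
  arc_comm b a ▸ left_mem_arc hb

theorem normalize_mem_arc {a b : E} {α β : ℝ} (hα : 0 ≤ α) (hβ : 0 ≤ β)
    (hv : α • a + β • b ≠ 0) : NormedSpace.normalize (α • a + β • b) ∈ arc a b :=
  mem_arc_of_mem_span (NormedSpace.norm_normalize_eq_one_iff.2 hv)
    (Submodule.smul_mem _ (⟨_, inv_nonneg.2 (norm_nonneg _)⟩ : ℝ≥0)
      (smul_add_smul_mem_span_pair hα hβ))

theorem normalize_mem_arc_inter {p q r s : E} {α β γ θ : ℝ} (hα : 0 ≤ α) (hβ : 0 ≤ β)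
    (hγ : 0 ≤ γ) (hθ : 0 ≤ θ) (h : α • p + β • q = γ • r + θ • s)
    (hv : γ • r + θ • s ≠ 0) :
    NormedSpace.normalize (γ • r + θ • s) ∈ arc p q ∩ arc r s :=
  ⟨h ▸ normalize_mem_arc hα hβ (h ▸ hv), normalize_mem_arc hγ hθ hv⟩

theorem sdist_add_sdist_eq_iff_mem_arc {a b x : E} (ha : ‖a‖ = 1) (hb : ‖b‖ = 1)
    (hx : ‖x‖ = 1) (hab : b ≠ -a) : sdist a x + sdist x b = sdist a b ↔ x ∈ arc a b := by
  have hπ : angle a b ≠ Real.pi := fun h => hab <| (inner_eq_neg_one_iff_of_norm_eq_one hb ha).1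
    (by rw [real_inner_comm, inner_eq_cos_angle_of_norm_eq_one ha hb, h, Real.cos_pi])
  rw [mem_arc_iff ha hb hab, sdist_eq_angle ha hx, sdist_eq_angle hx hb, sdist_eq_angle ha hb,
    eq_comm, angle_eq_angle_add_angle_iff (norm_ne_zero_iff.1 (by rw [hx]; exact one_ne_zero))]
  simp [hπ, hx]

theorem SphConvex.ne_neg (hC : SphConvex C) {x y : E} (hx : x ∈ C) (hy : y ∈ C) : y ≠ -x :=
  fun h => hC.2.1 x hx (h ▸ hy)

theorem SphConvex.arc_subset (hC : SphConvex C) {a b : E} (ha : a ∈ C) (hb : b ∈ C) :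
    arc a b ⊆ C := by
  intro z hz
  have hz1 := norm_eq_one_of_mem_arc (hC.1 ha) (hC.1 hb) (hC.ne_neg ha hb) hz
  obtain ⟨s, ⟨hs0, hs1⟩, rfl⟩ := hz
  have mem_cone : ∀ x ∈ C, x ∈ {y : E | ∃ t : ℝ, 0 ≤ t ∧ ∃ x ∈ C, y = t • x} :=
    fun x hx => ⟨1, zero_le_one, x, hx, (one_smul ℝ x).symm⟩
  obtain ⟨t, ht, y, hy, hw⟩ :
      (1 - s) • a + s • b ∈ {y : E | ∃ t : ℝ, 0 ≤ t ∧ ∃ x ∈ C, y = t • x} :=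
    hC.2.2 (mem_cone a ha) (mem_cone b hb) (by linarith) hs0 (by ring)
  change ‖NormedSpace.normalize _‖ = 1 at hz1
  change NormedSpace.normalize _ ∈ C
  rw [hw] at hz1 ⊢
  have ht0 : 0 < t := ht.lt_of_ne fun h0 => by simp [← h0] at hz1
  rwa [NormedSpace.normalize_smul_of_pos ht0,
    NormedSpace.normalize_eq_self_of_norm_eq_one (hC.1 hy)]

theorem SphConvex.smul_add_smul_eq_zero (hC : SphConvex C) {p q : E} (hp : p ∈ C) (hq : q ∈ C)
    {α β : ℝ} (hα : 0 ≤ α) (hβ : 0 ≤ β) (h : α • p + β • q = 0) : α = 0 ∧ β = 0 :=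
  _root_.smul_add_smul_eq_zero (hC.1 hp) (hC.1 hq) (hC.ne_neg hp hq) hα hβ h

theorem SphConvex.smul_add_smul_ne_zero (hC : SphConvex C) {p q : E} (hp : p ∈ C) (hq : q ∈ C)
    {α β : ℝ} (hα : 0 < α) (hβ : 0 ≤ β) : α • p + β • q ≠ 0 :=
  fun h => hα.ne' (hC.smul_add_smul_eq_zero hp hq hα.le hβ h).1

/-- The cone over a spherically convex set is pointed. -/
theorem SphConvex.coeffs_eq_zero (hC : SphConvex C) {a b c e : E} (ha : a ∈ C) (hb : b ∈ C)
    (hc : c ∈ C) (he : e ∈ C) {α β γ θ : ℝ} (hα : 0 ≤ α) (hβ : 0 ≤ β) (hγ : 0 ≤ γ) (hθ : 0 ≤ θ)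
    (h : α • a + β • b + γ • c + θ • e = 0) : α = 0 ∧ β = 0 ∧ γ = 0 ∧ θ = 0 := by
  by_cases hv : α • a + β • b = 0
  · obtain ⟨rfl, rfl⟩ := hC.smul_add_smul_eq_zero ha hb hα hβ hv
    obtain ⟨rfl, rfl⟩ := hC.smul_add_smul_eq_zero hc he hγ hθ (by simpa using h)
    exact ⟨rfl, rfl, rfl, rfl⟩
  have hw : γ • c + θ • e = -(α • a + β • b) := by linear_combination (norm := module) h
  have hx := hC.arc_subset ha hb (normalize_mem_arc hα hβ hv)
  have hy := hC.arc_subset hc he (normalize_mem_arc hγ hθ (hw ▸ neg_ne_zero.2 hv))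
  rw [hw, NormedSpace.normalize_neg] at hy
  exact absurd hy (hC.2.1 _ hx)

theorem sdist_le_sphDiam {x y : E} (hx : x ∈ C) (hy : y ∈ C) : sdist x y ≤ sphDiam C :=
  le_csSup ⟨Real.pi, by rintro _ ⟨x, -, y, -, rfl⟩; exact Real.arccos_le_pi _⟩ ⟨x, hx, y, hy, rfl⟩

theorem mem_arc_inter_of_mem_arc_inter (hC : SphConvex C)
    (hδ : ∀ x ∈ C, ∀ y ∈ C, sdist x y ≤ δ) {a b c e x : E} (ha : a ∈ C) (hb : b ∈ C)
    (hc : c ∈ C) (he : e ∈ C) (hab : sdist a b = δ) (hce : sdist c e = δ)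
    (hx : x ∈ arc a c ∩ arc b e) : x ∈ arc a b ∩ arc c e := by
  have hx1 : ‖x‖ = 1 := hC.1 (hC.arc_subset ha hc hx.1)
  have hac := (sdist_add_sdist_eq_iff_mem_arc (hC.1 ha) (hC.1 hc) hx1 (hC.ne_neg ha hc)).2 hx.1
  have hbe := (sdist_add_sdist_eq_iff_mem_arc (hC.1 hb) (hC.1 he) hx1 (hC.ne_neg hb he)).2 hx.2
  have hab' := sdist_triangle (hC.1 ha) hx1 (hC.1 hb)
  have hce' := sdist_triangle (hC.1 hc) hx1 (hC.1 he)
  have := hδ a ha c hc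
  have := hδ b hb e he
  rw [sdist_comm x c] at hac
  rw [sdist_comm b x] at hbe
  -- the two triangle inequalities through `x` add up to at most `2 δ`, so both are equalities
  exact ⟨(sdist_add_sdist_eq_iff_mem_arc (hC.1 ha) (hC.1 hb) hx1 (hC.ne_neg ha hb)).1
      (by linarith), (sdist_add_sdist_eq_iff_mem_arc (hC.1 hc) (hC.1 he) hx1 (hC.ne_neg hc he)).1
      (by linarith)⟩

theorem mem_arc_of_smul_eq (hC : SphConvex C) (hδ : ∀ x ∈ C, ∀ y ∈ C, sdist x y ≤ δ)
    {p q r s : E} (hp : p ∈ C) (hq : q ∈ C) (hr : r ∈ C) (hs : s ∈ C) (hpq : sdist p q = δ)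
    {μ ν ρ σ : ℝ} (hμ : 0 ≤ μ) (hν : 0 ≤ ν) (hρ : 0 ≤ ρ) (hσ : 0 ≤ σ) (hμν : 0 < μ ∨ 0 < ν)
    (h : μ • q = ν • p + (ρ • r + σ • s)) : q ∈ arc r s := by
  by_cases hu : ρ • r + σ • s = 0
  · rw [hu, add_zero] at h
    have hqp : q = p := by
      have := congrArg norm h
      rw [norm_smul, norm_smul, hC.1 hq, hC.1 hp, Real.norm_of_nonneg hμ,
        Real.norm_of_nonneg hν, mul_one, mul_one] at this
      subst this
      exact smul_right_injective E (by rcases hμν with h | h <;> exact h.ne') h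
    subst hqp
    rw [sdist_self (hC.1 hq)] at hpq
    rw [eq_of_sdist_le_zero (hC.1 hq) (hC.1 hr) (hpq ▸ hδ q hq r hr)]
    exact left_mem_arc (hC.1 hr)
  have hxrs := normalize_mem_arc hρ hσ hu
  have hu0 : 0 < ‖ρ • r + σ • s‖ := norm_pos_iff.2 hu
  rw [← NormedSpace.norm_smul_normalize (ρ • r + σ • s)] at h
  set x := NormedSpace.normalize (ρ • r + σ • s)
  have hxC : x ∈ C := hC.arc_subset hr hs hxrs
  have hμ0 : 0 < μ := hμ.lt_of_ne fun h0 => by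
    subst h0
    exact hu0.ne'
      (hC.smul_add_smul_eq_zero hxC hp hu0.le hν (by linear_combination (norm := module) -h)).1
  -- `q` lies on the arc from `p` to `x`, which is no longer than `δ = sdist p q`, so `q = x`
  have hqpx : q ∈ arc p x := by
    refine mem_arc_of_mem_span (hC.1 hq) ?_
    rw [← inv_smul_smul₀ hμ0.ne' q, h, smul_add, smul_smul, smul_smul]
    exact smul_add_smul_mem_span_pair (by positivity) (by positivity)
  have hadd := (sdist_add_sdist_eq_iff_mem_arc (hC.1 hp) (hC.1 hxC) (hC.1 hq)
    (hC.ne_neg hp hxC)).2 hqpx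
  have hqx : q = x := eq_of_sdist_le_zero (hC.1 hq) (hC.1 hxC) (by linarith [hδ p hp x hxC])
  rwa [hqx]

theorem arc_inter_nonempty_of_linear_relation (hC : SphConvex C)
    (hδ : ∀ x ∈ C, ∀ y ∈ C, sdist x y ≤ δ) {a b c e : E} (ha : a ∈ C) (hb : b ∈ C)
    (hc : c ∈ C) (he : e ∈ C) (hab : sdist a b = δ) (hce : sdist c e = δ) {α β γ θ : ℝ}
    (h : α • a + β • b + γ • c + θ • e = 0) (hne : ¬(α = 0 ∧ β = 0 ∧ γ = 0 ∧ θ = 0)) :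
    (arc a b ∩ arc c e).Nonempty := by
  wlog hα : 0 ≤ α generalizing α β γ θ
  · exact this (α := -α) (β := -β) (γ := -γ) (θ := -θ)
      (by linear_combination (norm := module) -h) (by simpa only [neg_eq_zero] using hne)
      (by linarith)
  have hba : sdist b a = δ := sdist_comm a b ▸ hab
  have hec : sdist e c = δ := sdist_comm c e ▸ hce
  rcases lt_or_ge β 0 with hβ | hβ <;> rcases lt_or_ge γ 0 with hγ | hγ <;>
    rcases lt_or_ge θ 0 with hθ | hθ
  · have h' : α • a = (-β) • b + ((-γ) • c + (-θ) • e) := by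
      linear_combination (norm := module) h
    exact ⟨a, left_mem_arc (hC.1 ha), mem_arc_of_smul_eq hC hδ hb ha hc he hba hα (by linarith)
      (by linarith) (by linarith) (.inr (by linarith)) h'⟩
  · have h' : α • a + θ • e = (-β) • b + (-γ) • c := by linear_combination (norm := module) h
    have hx := normalize_mem_arc_inter hα hθ (by linarith) (by linarith) h'
      (hC.smul_add_smul_ne_zero hb hc (by linarith) (by linarith))
    rw [arc_comm c e]
    exact ⟨_, mem_arc_inter_of_mem_arc_inter hC hδ ha hb he hc hab hec hx⟩
  · have h' : α • a + γ • c = (-β) • b + (-θ) • e := by linear_combination (norm := module) h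
    have hx := normalize_mem_arc_inter hα hγ (by linarith) (by linarith) h'
      (hC.smul_add_smul_ne_zero hb he (by linarith) (by linarith))
    exact ⟨_, mem_arc_inter_of_mem_arc_inter hC hδ ha hb hc he hab hce hx⟩
  · have h' : (-β) • b = α • a + (γ • c + θ • e) := by linear_combination (norm := module) -h
    exact ⟨b, right_mem_arc (hC.1 hb), mem_arc_of_smul_eq hC hδ ha hb hc he hab (by linarith) hα
      hγ hθ (.inl (by linarith)) h'⟩
  · have h' : α • a + β • b = (-γ) • c + (-θ) • e := by linear_combination (norm := module) h
    exact ⟨_, normalize_mem_arc_inter hα hβ (by linarith) (by linarith) h'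
      (hC.smul_add_smul_ne_zero hc he (by linarith) (by linarith))⟩
  · have h' : (-γ) • c = θ • e + (α • a + β • b) := by linear_combination (norm := module) -h
    exact ⟨c, mem_arc_of_smul_eq hC hδ he hc ha hb hec (by linarith) hθ hα hβ
      (.inl (by linarith)) h', left_mem_arc (hC.1 hc)⟩
  · have h' : (-θ) • e = γ • c + (α • a + β • b) := by linear_combination (norm := module) -h
    exact ⟨e, mem_arc_of_smul_eq hC hδ hc he ha hb hce (by linarith) hγ hα hβ
      (.inl (by linarith)) h', right_mem_arc (hC.1 he)⟩
  · exact absurd (hC.coeffs_eq_zero ha hb hc he hα hβ hγ hθ h) hne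

end

/-- In a body of constant diameter on `S²`, every two diametral chords
intersect. -/
theorem diametral_chords_intersect (δ : ℝ) (D : Set (EuclideanSpace ℝ (Fin 3)))
    (hD : SphBody D) (hcd : ConstDiam D δ)
    (a b c dd : EuclideanSpace ℝ (Fin 3))
    (ha : a ∈ D) (hb : b ∈ D) (hc : c ∈ D) (hdd : dd ∈ D)
    (hab : sdist a b = δ) (hcdd : sdist c dd = δ) :
    (arc a b ∩ arc c dd).Nonempty := by
  have hδ : ∀ x ∈ D, ∀ y ∈ D, sdist x y ≤ δ := fun x hx y hy => hcd.1 ▸ sdist_le_sphDiam hx hy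
  have hdep : ¬LinearIndependent ℝ ![a, b, c, dd] := fun h => by
    simpa using h.fintype_card_le_finrank
  obtain ⟨g, hg, i, hgi⟩ := Fintype.not_linearIndependent_iff.1 hdep
  refine arc_inter_nonempty_of_linear_relation hD.1 hδ ha hb hc hdd hab hcdd
    (by simpa [Fin.sum_univ_four] using hg) fun h0 => hgi ?_
  fin_cases i <;> simp [h0]

end
end

section
/- Let d ≥ 2 and let D be a spherical convex body on S^d of constant diameter δ with 0 < δ < π/2. If a hemisphere K supports D at a smooth point of the boundary of D, then width_K(D) = δ. -/
open scoped RealInnerProductSpace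
open Real

noncomputable section

lemma norm_eq_of_sq_eq {d : ℕ} {v : EuclideanSpace ℝ (Fin (d + 1))} {s : ℝ}
    (h : ⟪v, v⟫ = s ^ 2) (hs : 0 ≤ s) : ‖v‖ = s := by
  rw [real_inner_self_eq_norm_sq] at h
  rw [← Real.sqrt_sq (norm_nonneg v), h, Real.sqrt_sq hs]

lemma bessel_two {d : ℕ} (a p x : EuclideanSpace ℝ (Fin (d + 1)))
    (ha : ‖a‖ = 1) (hp : ‖p‖ = 1) (hap : ⟪a, p⟫ = 0) :
    ⟪a, x⟫ ^ 2 + ⟪p, x⟫ ^ 2 ≤ ‖x‖ ^ 2 := by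
  have hpa : ⟪p, a⟫ = 0 := by rw [real_inner_comm]; exact hap
  have haa : ⟪a, a⟫ = 1 := by rw [real_inner_self_eq_norm_sq, ha]; norm_num
  have hpp : ⟪p, p⟫ = 1 := by rw [real_inner_self_eq_norm_sq, hp]; norm_num
  have h := real_inner_self_nonneg (x := x - ⟪a, x⟫ • a - ⟪p, x⟫ • p)
  have hexp : ⟪x - ⟪a, x⟫ • a - ⟪p, x⟫ • p, x - ⟪a, x⟫ • a - ⟪p, x⟫ • p⟫
      = ‖x‖ ^ 2 - ⟪a, x⟫ ^ 2 - ⟪p, x⟫ ^ 2 := by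
    simp only [inner_sub_left, inner_sub_right, real_inner_smul_left, real_inner_smul_right,
      haa, hpp, hap, hpa, real_inner_comm x a, real_inner_comm x p,
      real_inner_self_eq_norm_sq x]
    ring
  rw [hexp] at h
  linarith

set_option maxHeartbeats 1000000 in
/-- If a hemisphere `K = H(a)` supports a body `D` of constant diameter
`δ < π/2` at a smooth point of its boundary, then `width_K(D) = δ`. -/
theorem widthAt_eq_of_smoothPoint (d : ℕ) (hd : 2 ≤ d) (δ : ℝ)
    (hδ0 : 0 < δ) (hδπ : δ < π / 2)
    (D : Set (EuclideanSpace ℝ (Fin (d + 1)))) (hD : SphBody D) (hcd : ConstDiam D δ)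
    (a p : EuclideanSpace ℝ (Fin (d + 1)))
    (hp : p ∈ sphBoundary D) (hsm : SmoothPoint D p) (hsupp : SupportsAt a D p) :
    widthAt a D = δ := by
  show sInf {w | ∃ b ∈ Sph d, b ≠ a ∧ b ≠ -a ∧ D ⊆ Hemi b ∧
      w = π - Real.arccos ⟪a, b⟫} = δ
  obtain ⟨⟨hsub, -, -⟩, hclosed, hint⟩ := hD
  obtain ⟨hdiam, hbd⟩ := hcd
  obtain ⟨ha1, hDa, hpD, hap⟩ := hsupp
  have ha1 : ‖a‖ = 1 := ha1
  have hp1 : ‖p‖ = 1 := hsub hpD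
  obtain ⟨p', hp'bd, hpp'⟩ := hbd p hp
  have hp'D : p' ∈ D := hp'bd.1
  have hp'1 : ‖p'‖ = 1 := hsub hp'D
  have hπ : (0 : ℝ) < π := Real.pi_pos
  have hδπ' : δ < π := by linarith
  have hcos : 0 < Real.cos δ := Real.cos_pos_of_mem_Ioo ⟨by linarith, hδπ⟩
  have hcoslt1 : Real.cos δ < 1 := by
    have := Real.strictAntiOn_cos (Set.mem_Icc.2 ⟨le_rfl, hπ.le⟩)
      (Set.mem_Icc.2 ⟨hδ0.le, hδπ'.le⟩) hδ0
    simpa using this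
  have hsin : 0 < Real.sin δ := Real.sin_pos_of_pos_of_lt_pi hδ0 hδπ'
  -- inner products of unit vectors are in [-1,1]
  have hmem11 : ∀ x y : EuclideanSpace ℝ (Fin (d + 1)), ‖x‖ = 1 → ‖y‖ = 1 →
      -1 ≤ ⟪x, y⟫ ∧ ⟪x, y⟫ ≤ 1 := by
    intro x y hx hy
    have h := abs_real_inner_le_norm x y
    rw [hx, hy, mul_one] at h
    exact abs_le.mp h
  have hppcos : ⟪p, p'⟫ = Real.cos δ := by
    have h := Real.cos_arccos (hmem11 p p' hp1 hp'1).1 (hmem11 p p' hp1 hp'1).2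
    rw [show Real.arccos ⟪p, p'⟫ = δ from hpp'] at h
    linarith
  -- every inner product between points of D is at least cos δ
  have hbdd : BddAbove {r | ∃ x ∈ D, ∃ y ∈ D, r = sdist x y} := by
    refine ⟨π, ?_⟩
    rintro r ⟨x, -, y, -, rfl⟩
    exact Real.arccos_le_pi _
  have hdle : ∀ x ∈ D, ∀ y ∈ D, Real.cos δ ≤ ⟪x, y⟫ := by
    intro x hx y hy
    have h1 : sdist x y ≤ δ := by
      rw [← hdiam]
      exact le_csSup hbdd ⟨x, hx, y, hy, rfl⟩
    have h2 : Real.cos δ ≤ Real.cos (Real.arccos ⟪x, y⟫) :=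
      Real.cos_le_cos_of_nonneg_of_le_pi (Real.arccos_nonneg _) hδπ'.le h1
    rwa [Real.cos_arccos (hmem11 x y (hsub hx) (hsub hy)).1
      (hmem11 x y (hsub hx) (hsub hy)).2] at h2
  have hpp1 : ⟪p, p⟫ = 1 := by rw [real_inner_self_eq_norm_sq, hp1]; norm_num
  have hp'p'1 : ⟪p', p'⟫ = 1 := by rw [real_inner_self_eq_norm_sq, hp'1]; norm_num
  have haa1 : ⟪a, a⟫ = 1 := by rw [real_inner_self_eq_norm_sq, ha1]; norm_num
  have hpa : ⟪p, a⟫ = 0 := by rw [real_inner_comm]; exact hap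
  have hp'p : ⟪p', p⟫ = Real.cos δ := by rw [real_inner_comm]; exact hppcos
  -- the candidate supporting center at p
  set c : EuclideanSpace ℝ (Fin (d + 1)) := (Real.sin δ)⁻¹ • (p' - Real.cos δ • p) with hc
  have hc1 : ‖c‖ = 1 := by
    have hv : ‖p' - Real.cos δ • p‖ = Real.sin δ := by
      apply norm_eq_of_sq_eq _ hsin.le
      simp only [inner_sub_left, inner_sub_right, real_inner_smul_left, real_inner_smul_right,
        hpp1, hp'p'1, hppcos, hp'p]
      nlinarith [Real.sin_sq_add_cos_sq δ]
    rw [hc, norm_smul, hv, norm_inv, Real.norm_eq_abs, abs_of_pos hsin,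
      inv_mul_cancel₀ hsin.ne']
  have hcp : ⟪c, p⟫ = 0 := by
    rw [hc]
    simp only [inner_sub_left, real_inner_smul_left, hp'p, hpp1]
    ring
  have hcD : D ⊆ Hemi c := by
    intro x hx
    refine ⟨hsub hx, ?_⟩
    rw [hc]
    simp only [inner_sub_left, real_inner_smul_left]
    have h1 : Real.cos δ ≤ ⟪p', x⟫ := hdle p' hp'D x hx
    have h2 : ⟪p, x⟫ ≤ 1 := (hmem11 p x hp1 (hsub hx)).2
    have h3 : 0 ≤ ⟪p', x⟫ - Real.cos δ * ⟪p, x⟫ := by nlinarith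
    positivity
  have hca : c = a := by
    obtain ⟨c₀, -, hu⟩ := hsm
    exact (hu c ⟨hc1, hcD, hpD, hcp⟩).trans (hu a ⟨ha1, hDa, hpD, hap⟩).symm
  have hp'eq : p' = Real.cos δ • p + Real.sin δ • a := by
    have h : Real.sin δ • c = p' - Real.cos δ • p := by
      rw [hc, smul_smul, mul_inv_cancel₀ hsin.ne', one_smul]
    rw [hca] at h
    have h2 : Real.sin δ • a + Real.cos δ • p = p' := eq_sub_iff_add_eq.mp h
    exact h2.symm.trans (add_comm _ _)
  have hip' : ∀ x : EuclideanSpace ℝ (Fin (d + 1)),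
      ⟪p', x⟫ = Real.cos δ * ⟪p, x⟫ + Real.sin δ * ⟪a, x⟫ := by
    intro x
    rw [hp'eq, inner_add_left, real_inner_smul_left, real_inner_smul_left]
  -- the witness for the upper bound
  set b : EuclideanSpace ℝ (Fin (d + 1)) := Real.sin δ • p - Real.cos δ • a with hb
  have hb1 : ‖b‖ = 1 := by
    apply norm_eq_of_sq_eq _ (by norm_num : (0:ℝ) ≤ 1)
    rw [hb]
    simp only [inner_sub_left, inner_sub_right, real_inner_smul_left, real_inner_smul_right,
      hpp1, haa1, hap, hpa]
    linear_combination Real.sin_sq_add_cos_sq δ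
  have habneg : ⟪a, b⟫ = -Real.cos δ := by
    rw [hb]
    simp only [inner_sub_right, real_inner_smul_right, hap, haa1]
    ring
  have hbnea : b ≠ a := by
    intro h
    rw [h, haa1] at habneg
    linarith
  have hbnena : b ≠ -a := by
    intro h
    rw [h] at habneg
    simp only [inner_neg_right, haa1] at habneg
    linarith
  have hbD : D ⊆ Hemi b := by
    intro x hx
    refine ⟨hsub hx, ?_⟩
    rw [hb]
    simp only [inner_sub_left, real_inner_smul_left]
    have h1 : Real.cos δ ≤ ⟪p, x⟫ := hdle p hpD x hx
    have h2 : 0 ≤ ⟪a, x⟫ := (hDa hx).2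
    have h3 : ⟪a, x⟫ ^ 2 + ⟪p, x⟫ ^ 2 ≤ 1 := by
      have := bessel_two a p x ha1 hp1 hap
      rwa [hsub hx, one_pow] at this
    have hu0 : 0 < ⟪p, x⟫ := lt_of_lt_of_le hcos h1
    have hkey : 0 ≤ (Real.sin δ * ⟪p, x⟫ - Real.cos δ * ⟪a, x⟫) *
        (Real.sin δ * ⟪p, x⟫ + Real.cos δ * ⟪a, x⟫) := by
      nlinarith [Real.sin_sq_add_cos_sq δ, sq_nonneg ⟪a, x⟫]
    have hpos : 0 < Real.sin δ * ⟪p, x⟫ + Real.cos δ * ⟪a, x⟫ := by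
      have := mul_pos hsin hu0
      nlinarith
    nlinarith [hkey, hpos]
  have hwb : π - Real.arccos ⟪a, b⟫ = δ := by
    rw [habneg, ← Real.cos_pi_sub, Real.arccos_cos (by linarith) (by linarith)]
    ring
  have hmemδ : δ ∈ {w | ∃ b' ∈ Sph d, b' ≠ a ∧ b' ≠ -a ∧ D ⊆ Hemi b' ∧
      w = π - Real.arccos ⟪a, b'⟫} :=
    ⟨b, hb1, hbnea, hbnena, hbD, hwb.symm⟩
  -- lower bound
  have hlow : ∀ w ∈ {w | ∃ b' ∈ Sph d, b' ≠ a ∧ b' ≠ -a ∧ D ⊆ Hemi b' ∧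
      w = π - Real.arccos ⟪a, b'⟫}, δ ≤ w := by
    rintro w ⟨b', hb'1, -, -, hb'D, rfl⟩
    have hb'1 : ‖b'‖ = 1 := hb'1
    have hs : 0 ≤ ⟪b', p⟫ := (hb'D hpD).2
    have hr : 0 ≤ ⟪b', p'⟫ := (hb'D hp'D).2
    have hr' : 0 ≤ Real.cos δ * ⟪p, b'⟫ + Real.sin δ * ⟪a, b'⟫ := by
      rw [← hip' b']
      rw [real_inner_comm] at hr
      exact hr
    have hs' : 0 ≤ ⟪p, b'⟫ := by rwa [real_inner_comm] at hs
    have hbes : ⟪a, b'⟫ ^ 2 + ⟪p, b'⟫ ^ 2 ≤ 1 := by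
      have := bessel_two a p b' ha1 hp1 hap
      rwa [hb'1, one_pow] at this
    have ht : -Real.cos δ ≤ ⟪a, b'⟫ := by
      by_contra hcon
      push_neg at hcon
      have h1 : Real.sin δ * ⟪a, b'⟫ + Real.sin δ * Real.cos δ < 0 := by nlinarith
      have h2 : Real.sin δ < ⟪p, b'⟫ := by nlinarith
      have h3 : Real.sin δ ^ 2 < ⟪p, b'⟫ ^ 2 := by nlinarith
      have h4 : Real.cos δ ^ 2 < ⟪a, b'⟫ ^ 2 := by nlinarith
      nlinarith [Real.sin_sq_add_cos_sq δ]
    have harc : Real.arccos ⟪a, b'⟫ ≤ π - δ := by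
      by_contra hcon
      push_neg at hcon
      have hm : -1 ≤ ⟪a, b'⟫ ∧ ⟪a, b'⟫ ≤ 1 := hmem11 a b' ha1 hb'1
      have h2 := Real.strictAntiOn_cos
        (Set.mem_Icc.2 ⟨by linarith, by linarith⟩)
        (Set.mem_Icc.2 ⟨Real.arccos_nonneg _, Real.arccos_le_pi _⟩) hcon
      rw [Real.cos_arccos hm.1 hm.2, Real.cos_pi_sub] at h2
      linarith
    linarith
  have hbddb : BddBelow {w | ∃ b' ∈ Sph d, b' ≠ a ∧ b' ≠ -a ∧ D ⊆ Hemi b' ∧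
      w = π - Real.arccos ⟪a, b'⟫} := ⟨δ, hlow⟩
  exact le_antisymm (csInf_le hbddb hmemδ) (le_csInf ⟨δ, hmemδ⟩ hlow)


end
end

section
/- Let d ≥ 2, let a, p ∈ S^d with ⟪a,p⟫ = 0, let 0 < r < π/2, and set q = (cos r) • p + (sin r) • a (so q lies in the interior of the hemisphere H(a), the arc pq is orthogonal to the boundary of H(a) at p, and dist_S(p,q) = r). Then for every b ∈ S^d with ⟪b,q⟫ = 0 and b ≠ a, b ≠ −a, the thickness of the lune H(a) ∩ H(b) satisfies π − Real.arccos ⟪a,b⟫ ≥ r; moreover, equality holds exactly when b = (sin r) • p − (cos r) • a, i.e., the lune H(a) ∩ H(b) whose second boundary is orthogonal to the arc pq at q has the smallest thickness among all such lunes. -/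
open scoped RealInnerProductSpace
open Real

noncomputable section

set_option maxHeartbeats 1000000 in
/-- Lemma: among all lunes `H(a) ∩ H(b)` with `q` in the boundary of
`H(b)`, the one whose second boundary is orthogonal to the arc `pq` at `q` has the
smallest thickness, namely `r`. -/
theorem lune_min_thickness (d : ℕ) (hd : 2 ≤ d)
    (a p : EuclideanSpace ℝ (Fin (d + 1))) (ha : a ∈ Sph d) (hp : p ∈ Sph d)
    (hap : ⟪a, p⟫ = 0) (r : ℝ) (hr0 : 0 < r) (hrπ : r < π / 2)
    (q : EuclideanSpace ℝ (Fin (d + 1))) (hq : q = Real.cos r • p + Real.sin r • a) :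
    ∀ b ∈ Sph d, ⟪b, q⟫ = 0 → b ≠ a → b ≠ -a →
      r ≤ π - Real.arccos ⟪a, b⟫ ∧
      (π - Real.arccos ⟪a, b⟫ = r ↔ b = Real.sin r • p - Real.cos r • a) := by
  intro b hb hbq hba hbna
  have ha1 : ‖a‖ = 1 := ha
  have hp1 : ‖p‖ = 1 := hp
  have hb1 : ‖b‖ = 1 := hb
  have haa : ⟪a, a⟫ = 1 := by
    rw [real_inner_self_eq_norm_sq, ha1]; norm_num
  have hpp : ⟪p, p⟫ = 1 := by
    rw [real_inner_self_eq_norm_sq, hp1]; norm_num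
  have hbb : ⟪b, b⟫ = 1 := by
    rw [real_inner_self_eq_norm_sq, hb1]; norm_num
  set α := ⟪a, b⟫ with hαdef
  set β := ⟪p, b⟫ with hβdef
  have hbp2 : ⟪b, p⟫ = β := (real_inner_comm b p).symm
  have hba2 : ⟪b, a⟫ = α := (real_inner_comm b a).symm
  have hpa2 : ⟪p, a⟫ = 0 := by rw [real_inner_comm]; exact hap
  have hπ := Real.pi_pos
  have hrπ' : r ≤ π := by linarith
  have hcr : 0 < Real.cos r := Real.cos_pos_of_mem_Ioo ⟨by linarith, hrπ⟩
  have hsr : 0 < Real.sin r := Real.sin_pos_of_pos_of_lt_pi hr0 (by linarith)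
  have hsc := Real.sin_sq_add_cos_sq r
  have hrel : Real.cos r * β + Real.sin r * α = 0 := by
    have h := hbq
    rw [hq, inner_add_right, real_inner_smul_right, real_inner_smul_right, hbp2, hba2] at h
    exact h
  have hexp : ⟪b - β • p - α • a, b - β • p - α • a⟫ = 1 - α ^ 2 - β ^ 2 := by
    simp only [inner_sub_left, inner_sub_right, real_inner_smul_left, real_inner_smul_right,
      haa, hpp, hbb, hap, hpa2, hba2, hbp2]
    ring
  have key : α ^ 2 + β ^ 2 ≤ 1 := by
    have h0 : (0:ℝ) ≤ ⟪b - β • p - α • a, b - β • p - α • a⟫ := real_inner_self_nonneg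
    linarith [hexp ▸ h0]
  have hsq : (Real.cos r * β) ^ 2 = (Real.sin r * α) ^ 2 := by
    have h1 : Real.cos r * β = -(Real.sin r * α) := by linarith
    rw [h1]; ring
  have h4 : α ^ 2 = Real.cos r ^ 2 * (α ^ 2 + β ^ 2) := by
    linear_combination (-(α ^ 2)) * hsc - hsq
  have h3 : Real.cos r ^ 2 * (α ^ 2 + β ^ 2) ≤ Real.cos r ^ 2 := by
    nlinarith [sq_nonneg (Real.cos r)]
  have hαsq : α ^ 2 ≤ Real.cos r ^ 2 := by linarith [h4 ▸ h3]
  have hαge : -Real.cos r ≤ α := by nlinarith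
  have hαle1 : α ≤ 1 := by nlinarith [Real.cos_le_one r]
  have hαge1 : -1 ≤ α := by nlinarith [Real.cos_le_one r]
  have harc : Real.arccos (-(Real.cos r)) = π - r := by
    rw [Real.arccos_neg, Real.arccos_cos hr0.le hrπ']
  have hmain : Real.arccos α ≤ π - r := by
    rw [← harc]
    have := Real.monotone_arcsin hαge
    simp only [Real.arccos]
    linarith
  refine ⟨by linarith, ?_, ?_⟩
  · intro heq
    have harccos : Real.arccos α = π - r := by linarith
    have hα : α = -Real.cos r := by
      have := Real.cos_arccos hαge1 hαle1
      rw [harccos, Real.cos_pi_sub] at this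
      linarith
    have hsum : α ^ 2 + β ^ 2 = 1 := by
      have hαsq' : α ^ 2 = Real.cos r ^ 2 := by rw [hα]; ring
      have hc2 : (0:ℝ) < Real.cos r ^ 2 := by positivity
      have := h4
      rw [hαsq'] at this
      nlinarith
    have hv : b - β • p - α • a = 0 := by
      have h5 : ⟪b - β • p - α • a, b - β • p - α • a⟫ = 0 := by rw [hexp]; linarith
      exact inner_self_eq_zero.mp h5
    have hβval : β = Real.sin r := by
      have h1 : Real.cos r * β = Real.cos r * Real.sin r := by
        rw [hα] at hrel; nlinarith
      exact mul_left_cancel₀ (ne_of_gt hcr) h1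
    have hbval : b = β • p + α • a := by
      have h2 : b - (β • p + α • a) = 0 := by rw [← hv]; abel
      exact sub_eq_zero.mp h2
    rw [hbval, hβval, hα]
    module
  · intro hbeq
    have hα : α = -Real.cos r := by
      rw [hαdef, hbeq, inner_sub_right, real_inner_smul_right, real_inner_smul_right, hap, haa]
      ring
    rw [hα, harc]
    ring

end
end
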